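/- arXiv:1908.11555 — 10 statements merged into one kernel-verified Lean document; each statement's English description precedes it below -/
import Mathlib

section
/- For every real x, the momentum function p(λ) = −i·Log(−i·tanh λ) satisfies p(x + iπ/4) = −π/2 + 2·arctan(e^{−2x}); in particular p is real-valued on the line ℝ + iπ/4. -/
/-!
With `v = e^{-2x}` one has `e^{-2λ} = -i v` at `λ = x + iπ/4`, so
`tanh λ = (1 + i v) / (1 - i v) = e^{2i arctan v}` by the logarithmic formula for the complex
arctangent. Hence `-i tanh λ = e^{iθ}` with `θ = -π/2 + 2 arctan v ∈ (-π/2, π/2)`, and the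
principal logarithm returns `iθ`.
-/

open Complex Real

/-- The momentum function of the XX chain: `p(λ) = -i Log(-i tanh λ)`,
with `Log` the principal branch of the complex logarithm. -/
noncomputable def momentum (l : ℂ) : ℂ := -Complex.I * Complex.log (-Complex.I * Complex.tanh l)

namespace Complex

theorem tanh_eq_one_sub_exp_div_one_add_exp (z : ℂ) :
    tanh z = (1 - exp (-2 * z)) / (1 + exp (-2 * z)) := by
  have hexp : exp (-2 * z) = exp (-z) * exp (-z) := by rw [← exp_add]; ring_nf
  have hinv : exp (-z) * exp z = 1 := by rw [← exp_add, neg_add_cancel, exp_zero]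
  rw [tanh_eq_sinh_div_cosh, sinh, cosh, div_div_div_cancel_right₀ two_ne_zero,
    ← mul_div_mul_left _ _ (exp_ne_zero (-z)), hexp]
  congr 1 <;> linear_combination hinv

theorem exp_two_mul_arctan_mul_I {z : ℂ} (h₁ : z ≠ I) (h₂ : z ≠ -I) :
    exp (2 * arctan z * I) = (1 + z * I) / (1 - z * I) := by
  have hnum : 1 + z * I ≠ 0 := fun h ↦ h₁ (by linear_combination -I * h + z * I_sq)
  have hden : 1 - z * I ≠ 0 := fun h ↦ h₂ (by linear_combination I * h + z * I_sq)
  rw [arctan, show 2 * (-I / 2 * log ((1 + z * I) / (1 - z * I))) * I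
      = -(I * I) * log ((1 + z * I) / (1 - z * I)) by ring,
    I_mul_I, neg_neg, one_mul, exp_log (div_ne_zero hnum hden)]

end Complex

theorem tanh_add_mul_pi_div_four (x : ℝ) :
    tanh (x + I * (π / 4)) = exp (2 * Real.arctan (Real.exp (-2 * x)) * I) := by
  have hexp : exp (-2 * (x + I * (π / 4))) = -(Real.exp (-2 * x) * I) := by
    rw [show -2 * ((x : ℂ) + I * (π / 4)) = (-2 * x : ℝ) + (-(π / 2) : ℝ) * I by push_cast; ring,
      Complex.exp_add, exp_mul_I, ← ofReal_exp, ← ofReal_cos, ← ofReal_sin, Real.cos_neg,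
      Real.sin_neg, Real.cos_pi_div_two, Real.sin_pi_div_two]
    push_cast
    ring
  have hI : ((Real.exp (-2 * x) : ℝ) : ℂ) ≠ I := fun h ↦ by
    simpa only [ofReal_im, I_im, zero_ne_one] using congrArg im h
  have hnegI : ((Real.exp (-2 * x) : ℝ) : ℂ) ≠ -I := fun h ↦ by
    have him := congrArg im h
    norm_num only [ofReal_im, neg_im, I_im] at him
  rw [tanh_eq_one_sub_exp_div_one_add_exp, hexp, ofReal_arctan, exp_two_mul_arctan_mul_I hI hnegI,
    sub_neg_eq_add, ← sub_eq_add_neg]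

theorem momentum_eq_of_neg_I_mul_tanh_eq_exp {l : ℂ} {θ : ℝ} (hθ : θ ∈ Set.Ioc (-π) π)
    (h : -I * tanh l = exp (θ * I)) : momentum l = θ := by
  rw [momentum, h, log_exp (by simpa using hθ.1) (by simpa using hθ.2)]
  linear_combination -(θ : ℂ) * I_sq

/-- For real `x`, `p(x + iπ/4) = -π/2 + 2 arctan(e^{-2x})`; in particular `p` is
real-valued on the line `ℝ + iπ/4`. -/
theorem momentum_on_upper_line (x : ℝ) :
    momentum (x + Complex.I * (π / 4)) =
      ((-(π / 2) + 2 * Real.arctan (Real.exp (-2 * x)) : ℝ) : ℂ) ∧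
    (momentum (x + Complex.I * (π / 4))).im = 0 := by
  have hθ : -(π / 2) + 2 * Real.arctan (Real.exp (-2 * x)) ∈ Set.Ioc (-π) π := by
    have hpos : 0 < Real.arctan (Real.exp (-2 * x)) := Real.arctan_pos.2 (Real.exp_pos _)
    have hlt := Real.arctan_lt_pi_div_two (Real.exp (-2 * x))
    constructor <;> linarith [Real.pi_pos]
  have hneg_I : -I = exp ((-(π / 2) : ℝ) * I) := by
    rw [exp_mul_I, ← ofReal_cos, ← ofReal_sin, Real.cos_neg, Real.sin_neg, Real.cos_pi_div_two,
      Real.sin_pi_div_two]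
    push_cast
    ring
  have hp := momentum_eq_of_neg_I_mul_tanh_eq_exp (l := x + I * (π / 4)) hθ (by
    rw [tanh_add_mul_pi_div_four, hneg_I, ← Complex.exp_add]
    push_cast
    ring_nf)
  exact ⟨hp, by rw [hp, ofReal_im]⟩
end

section
/- For every real x ≠ 0, the momentum function p(λ) = −i·Log(−i·tanh λ) satisfies p(x − iπ/4) = −π·sign(x) + π/2 − 2·arctan(e^{−2x}), where sign(x) = 1 for x > 0 and sign(x) = −1 for x < 0; in particular p is real-valued on the line ℝ − iπ/4 away from the point −iπ/4. -/
/-!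
With `t = e^{-2x}` one has `tanh (x - iπ/4) = (1 - it)/(1 + it) = e^{-2i arctan t}`, so
`-i tanh (x - iπ/4) = e^{iθ}` with `θ = -π/2 - 2 arctan t`. Since `arctan t` lies on the same side
of `π/4` as `t` of `1`, this `θ` lies in `(-π, π]` for `x > 0`, while for `x < 0` the shift
`θ + 2π` does; on that strip the principal `Log` inverts `exp`, so `p` is that real angle.
-/

open Complex Real

namespace Complex

theorem tanh_eq_exp_two_mul (z : ℂ) : tanh z = (exp (2 * z) - 1) / (exp (2 * z) + 1) := by
  have hsinh : exp z - exp (-z) = exp (-z) * (exp (2 * z) - 1) := by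
    rw [mul_sub, ← exp_add, two_mul, neg_add_cancel_left, mul_one]
  have hcosh : exp z + exp (-z) = exp (-z) * (exp (2 * z) + 1) := by
    rw [mul_add, ← exp_add, two_mul, neg_add_cancel_left, mul_one]
  rw [tanh_eq_sinh_div_cosh, sinh, cosh, div_div_div_cancel_right₀ two_ne_zero, hsinh, hcosh,
    mul_div_mul_left _ _ (exp_ne_zero _)]

theorem tanh_sub_I_mul_pi_div_four (z : ℂ) :
    tanh (z - I * (π / 4)) = (1 - exp (-2 * z) * I) / (1 + exp (-2 * z) * I) := by
  have hexp : exp (2 * (z - I * (π / 4))) = -I * exp (2 * z) := by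
    rw [show 2 * (z - I * (π / 4)) = 2 * z + -(π / 2 * I) by ring, exp_add, exp_neg,
      exp_pi_div_two_mul_I, inv_I, mul_comm]
  have hunit : exp (-2 * z) * exp (2 * z) = 1 := by
    rw [← exp_add, neg_mul, neg_add_cancel, exp_zero]
  have hI : I * exp (-2 * z) ≠ 0 := mul_ne_zero I_ne_zero (exp_ne_zero _)
  rw [tanh_eq_exp_two_mul, hexp, ← mul_div_mul_left _ _ hI]
  congr 1 <;> linear_combination (-I ^ 2) * hunit - I_sq

theorem exp_neg_two_mul_arctan_mul_I (t : ℝ) :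
    exp (-(2 * Real.arctan t) * I) = (1 - t * I) / (1 + t * I) := by
  have hne : (1 + t * I) / (1 - t * I) ≠ 0 := by
    refine div_ne_zero ?_ ?_ <;> intro h <;> simpa using congrArg re h
  rw [ofReal_arctan, arctan,
    show ∀ L : ℂ, -(2 * (-I / 2 * L)) * I = -L from fun L ↦ by linear_combination L * I_sq,
    exp_neg, exp_log hne, inv_div]

end Complex

theorem momentum_eq_of_exp_mul_I_eq {l : ℂ} {θ : ℝ} (h₁ : -π < θ) (h₂ : θ ≤ π)
    (h : exp (θ * I) = -I * tanh l) : momentum l = θ := by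
  rw [momentum, ← h, log_exp (by simpa using h₁) (by simpa using h₂)]
  linear_combination (-θ : ℂ) * I_sq

theorem neg_I_mul_tanh_sub_I_mul_pi_div_four (x : ℝ) :
    -I * tanh (x - I * (π / 4)) = exp ((-(π / 2) - 2 * Real.arctan (Real.exp (-2 * x))) * I) := by
  set α := Real.arctan (Real.exp (-2 * x))
  rw [show ((-(π / 2) - 2 * α) * I : ℂ) = -(π / 2 * I) + -(2 * α) * I by ring, Complex.exp_add,
    Complex.exp_neg, exp_pi_div_two_mul_I, inv_I, exp_neg_two_mul_arctan_mul_I,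
    tanh_sub_I_mul_pi_div_four]
  push_cast
  ring

/-- For real `x ≠ 0`, `p(x - iπ/4) = -π sign(x) + π/2 - 2 arctan(e^{-2x})`, where
`sign(x) = 1` for `x > 0` and `sign(x) = -1` for `x < 0`; in particular `p` is
real-valued on the line `ℝ - iπ/4` away from `-iπ/4`. -/
theorem momentum_on_lower_line (x : ℝ) (hx : x ≠ 0) :
    momentum (x - Complex.I * (π / 4)) =
      ((-π * (if 0 < x then (1 : ℝ) else -1) + π / 2
          - 2 * Real.arctan (Real.exp (-2 * x)) : ℝ) : ℂ) ∧
    (momentum (x - Complex.I * (π / 4))).im = 0 := by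
  have htanh := neg_I_mul_tanh_sub_I_mul_pi_div_four x
  set α := Real.arctan (Real.exp (-2 * x))
  have hα₀ : -(π / 2) < α := Real.neg_pi_div_two_lt_arctan _
  have hα₁ : α < π / 2 := Real.arctan_lt_pi_div_two _
  have hp : momentum (x - I * (π / 4)) = ((-π * (if 0 < x then (1 : ℝ) else -1) + π / 2
      - 2 * α : ℝ) : ℂ) := by
    rcases hx.lt_or_gt with hneg | hpos
    · have hα : π / 4 < α := by
        rw [← Real.arctan_one]
        exact Real.arctan_strictMono (Real.one_lt_exp_iff.2 (by linarith))
      rw [if_neg hneg.not_gt]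
      refine momentum_eq_of_exp_mul_I_eq (by linarith) (by linarith) ?_
      rw [htanh, show ((-π * -1 + π / 2 - 2 * α : ℝ) : ℂ) = -(π / 2) - 2 * α + 2 * π by
        push_cast; ring]
      exact exp_mul_I_periodic _
    · have hα : α < π / 4 := by
        rw [← Real.arctan_one]
        exact Real.arctan_strictMono (Real.exp_lt_one_iff.2 (by linarith))
      rw [if_pos hpos]
      refine momentum_eq_of_exp_mul_I_eq (by linarith) (by linarith) ?_
      rw [htanh]
      congr 2
      push_cast
      ring
  exact ⟨hp, by rw [hp, ofReal_im]⟩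
end

section
/- Let J > 0 and 0 < h < 4J, and let z_F > 0 satisfy cosh(2·z_F) = 4J/h. Then the momentum function p(λ) = −i·Log(−i·tanh λ) evaluated at the left Fermi rapidity λ_F^− = iπ/4 − z_F equals the Fermi momentum: p(λ_F^−) = arccos(h/(4J)), where arccos is the real inverse cosine. -/
open Complex Real

set_option maxHeartbeats 1000000 in
/-- For `J > 0`, `0 < h < 4J` and `z_F > 0` with `cosh(2 z_F) = 4J/h`, the momentum
evaluated at the left Fermi rapidity `λ_F^- = iπ/4 - z_F` equals the Fermi momentum
`p_F = arccos(h/(4J))`. -/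
theorem momentum_at_left_fermi (J h zF : ℝ) (hJ : 0 < J) (hh : 0 < h) (hh4 : h < 4 * J)
    (hzF : 0 < zF) (hcosh : Real.cosh (2 * zF) = 4 * J / h) :
    momentum (Complex.I * (π / 4) - (zF : ℂ)) = ((Real.arccos (h / (4 * J)) : ℝ) : ℂ) := by
  have h4J : (0:ℝ) < 4 * J := by linarith
  set θ := Real.arccos (h / (4 * J)) with hθdef
  set C := Real.cosh zF with hCdef
  set S := Real.sinh zF with hSdef
  have hCpos : 0 < C := Real.cosh_pos zF
  have hSpos : 0 < S := Real.sinh_pos_iff.mpr hzF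
  have hpyth : C ^ 2 - S ^ 2 = 1 := Real.cosh_sq_sub_sinh_sq zF
  have hK : Real.cosh (2 * zF) = C ^ 2 + S ^ 2 := by
    rw [Real.cosh_two_mul]
  have hSh2 : Real.sinh (2 * zF) = 2 * S * C := Real.sinh_two_mul zF
  have hKpos : (0:ℝ) < C ^ 2 + S ^ 2 := by positivity
  have hxpos : 0 < h / (4 * J) := div_pos hh h4J
  have hx1 : h / (4 * J) ≤ 1 := by
    rw [div_le_one h4J]; linarith
  have hxneg : (-1:ℝ) ≤ h / (4 * J) := by linarith
  have hc1 : h / (4 * J) = 1 / Real.cosh (2 * zF) := by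
    rw [hcosh]; field_simp
  have hcosθ : Real.cos θ = 1 / (C ^ 2 + S ^ 2) := by
    rw [hθdef, Real.cos_arccos hxneg hx1, hc1, hK]
  have hsinsq : 1 - (h / (4 * J)) ^ 2 = (2 * S * C / (C ^ 2 + S ^ 2)) ^ 2 := by
    rw [hc1, hK]
    field_simp
    nlinarith
  have hsinθ : Real.sin θ = 2 * S * C / (C ^ 2 + S ^ 2) := by
    rw [hθdef, Real.sin_arccos, hsinsq, Real.sqrt_sq (by positivity)]
  have hre : C = Real.cos θ * C + Real.sin θ * S := by
    rw [hcosθ, hsinθ]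
    field_simp
    nlinarith
  have him : S = Real.sin θ * C - Real.cos θ * S := by
    rw [hcosθ, hsinθ]
    field_simp
    nlinarith
  have hden : ((C:ℂ) - Complex.I * (S:ℂ)) ≠ 0 := by
    intro hz
    have : C = 0 := by
      have := congrArg Complex.re hz
      simpa using this
    linarith
  have h2ne : ((Real.sqrt 2 / 2 : ℝ) : ℂ) ≠ 0 := by
    have : (0:ℝ) < Real.sqrt 2 / 2 := by positivity
    exact_mod_cast ne_of_gt this
  have hw : Complex.I * (↑π / 4) - (zF : ℂ) = ((π / 4 : ℝ) : ℂ) * Complex.I + ((-zF : ℝ) : ℂ) := by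
    push_cast; ring
  have htanh : Complex.tanh (Complex.I * (↑π / 4) - (zF : ℂ)) =
      (Complex.I * (C:ℂ) - (S:ℂ)) / ((C:ℂ) - Complex.I * (S:ℂ)) := by
    rw [hw, Complex.tanh_eq_sinh_div_cosh, Complex.sinh_add, Complex.cosh_add,
        Complex.sinh_mul_I, Complex.cosh_mul_I, ← Complex.ofReal_sin, ← Complex.ofReal_cos,
        ← Complex.ofReal_sinh, ← Complex.ofReal_cosh, Real.sin_pi_div_four, Real.cos_pi_div_four,
        Real.sinh_neg, Real.cosh_neg]
    rw [show ((Real.sqrt 2 / 2 : ℝ) : ℂ) * Complex.I * ((Real.cosh zF : ℝ) : ℂ) +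
          ((Real.sqrt 2 / 2 : ℝ) : ℂ) * ((-Real.sinh zF : ℝ) : ℂ) =
          ((Real.sqrt 2 / 2 : ℝ) : ℂ) * (Complex.I * (C:ℂ) - (S:ℂ)) by
            simp only [Complex.ofReal_neg]; rw [hCdef, hSdef]; ring,
        show ((Real.sqrt 2 / 2 : ℝ) : ℂ) * ((Real.cosh zF : ℝ) : ℂ) +
          ((Real.sqrt 2 / 2 : ℝ) : ℂ) * Complex.I * ((-Real.sinh zF : ℝ) : ℂ) =
          ((Real.sqrt 2 / 2 : ℝ) : ℂ) * ((C:ℂ) - Complex.I * (S:ℂ)) by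
            simp only [Complex.ofReal_neg]; rw [hCdef, hSdef]; ring]
    exact mul_div_mul_left _ _ h2ne
  have hexp : Complex.exp ((θ : ℂ) * Complex.I) =
      ((C:ℂ) + Complex.I * (S:ℂ)) / ((C:ℂ) - Complex.I * (S:ℂ)) := by
    rw [Complex.exp_mul_I, ← Complex.ofReal_cos, ← Complex.ofReal_sin, eq_div_iff hden]
    apply Complex.ext
    · simp only [Complex.add_re, Complex.mul_re, Complex.sub_re, Complex.sub_im,
        Complex.ofReal_re, Complex.ofReal_im, Complex.I_re, Complex.I_im, Complex.mul_im,
        Complex.add_im]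
      ring_nf
      nlinarith [hre, him]
    · simp only [Complex.add_re, Complex.mul_re, Complex.sub_re, Complex.sub_im,
        Complex.ofReal_re, Complex.ofReal_im, Complex.I_re, Complex.I_im, Complex.mul_im,
        Complex.add_im]
      ring_nf
      nlinarith [hre, him]
  have hθ0 : 0 ≤ θ := Real.arccos_nonneg _
  have hθπ : θ ≤ π := Real.arccos_le_pi _
  have hlog : Complex.log (Complex.exp ((θ:ℂ) * Complex.I)) = (θ:ℂ) * Complex.I := by
    apply Complex.log_exp
    · simpa using lt_of_lt_of_le (neg_neg_iff_pos.mpr Real.pi_pos) hθ0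
    · simpa using hθπ
  have hmain : -Complex.I * Complex.tanh (Complex.I * (↑π / 4) - (zF : ℂ)) =
      Complex.exp ((θ:ℂ) * Complex.I) := by
    rw [htanh, hexp, ← mul_div_assoc]
    congr 1
    linear_combination (-(C:ℂ)) * Complex.I_sq
  show -Complex.I * Complex.log (-Complex.I * Complex.tanh (Complex.I * (↑π / 4) - (zF : ℂ))) = _
  rw [hmain, hlog]
  rw [show -Complex.I * ((θ:ℂ) * Complex.I) = (θ:ℂ) * (-(Complex.I * Complex.I)) by ring,
      Complex.I_mul_I]
  simp
end

section
/- For every real x, the momentum function p(λ) = −i·Log(−i·tanh λ) satisfies sin(p(x + iπ/4)) = −tanh(2x), cos(p(x + iπ/4)) = 1/cosh(2x), and for x ≠ 0 also sin(p(x − iπ/4)) = −tanh(2x), cos(p(x − iπ/4)) = −1/cosh(2x). -/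
open Complex Real

lemma sin_neg_I_log (w : ℂ) (hw : w ≠ 0) :
    Complex.sin (-Complex.I * Complex.log w) = (w⁻¹ - w) * Complex.I / 2 := by
  have h1 : -Complex.I * Complex.log w * Complex.I = Complex.log w := by
    linear_combination (-Complex.log w) * Complex.I_mul_I
  have h2 : -(-Complex.I * Complex.log w) * Complex.I = -Complex.log w := by
    linear_combination (Complex.log w) * Complex.I_mul_I
  show (Complex.exp _ - Complex.exp _) * Complex.I / 2 = _
  rw [h1, h2, Complex.exp_neg, Complex.exp_log hw]

lemma cos_neg_I_log (w : ℂ) (hw : w ≠ 0) :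
    Complex.cos (-Complex.I * Complex.log w) = (w + w⁻¹) / 2 := by
  have h1 : -Complex.I * Complex.log w * Complex.I = Complex.log w := by
    linear_combination (-Complex.log w) * Complex.I_mul_I
  have h2 : -(-Complex.I * Complex.log w) * Complex.I = -Complex.log w := by
    linear_combination (Complex.log w) * Complex.I_mul_I
  show (Complex.exp _ + Complex.exp _) / 2 = _
  rw [h1, h2, Complex.exp_neg, Complex.exp_log hw]

/-- For real `x`: `sin(p(x + iπ/4)) = -tanh(2x)`, `cos(p(x + iπ/4)) = 1/cosh(2x)`,
and for `x ≠ 0` also `sin(p(x - iπ/4)) = -tanh(2x)`, `cos(p(x - iπ/4)) = -1/cosh(2x)`. -/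
theorem sin_cos_momentum_on_lines (x : ℝ) :
    Complex.sin (momentum (x + Complex.I * (π / 4))) = ((-Real.tanh (2 * x) : ℝ) : ℂ) ∧
    Complex.cos (momentum (x + Complex.I * (π / 4))) = ((1 / Real.cosh (2 * x) : ℝ) : ℂ) ∧
    (x ≠ 0 →
      Complex.sin (momentum (x - Complex.I * (π / 4))) = ((-Real.tanh (2 * x) : ℝ) : ℂ) ∧
      Complex.cos (momentum (x - Complex.I * (π / 4))) = ((-(1 / Real.cosh (2 * x)) : ℝ) : ℂ)) := by
  set c : ℂ := (Real.cosh x : ℂ) with hc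
  set s : ℂ := (Real.sinh x : ℂ) with hs
  have hd1 : c + Complex.I * s ≠ 0 := by
    intro h
    have := congrArg Complex.re h
    simp [hc, hs] at this
    exact (Real.cosh_pos x).ne' this
  have hd2 : c - Complex.I * s ≠ 0 := by
    intro h
    have := congrArg Complex.re h
    simp [hc, hs] at this
    exact (Real.cosh_pos x).ne' this
  have ha : ((Real.sqrt 2 / 2 : ℝ) : ℂ) ≠ 0 := by simp
  have h2c : ((Real.cosh (2*x) : ℝ) : ℂ) = c^2 + s^2 := by
    rw [Real.cosh_two_mul]; push_cast [hc, hs]; ring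
  have h2s : ((Real.sinh (2*x) : ℝ) : ℂ) = 2 * s * c := by
    rw [Real.sinh_two_mul]; push_cast [hc, hs]; ring
  have h1 : c^2 - s^2 = 1 := by
    rw [hc, hs]
    norm_cast
    exact Real.cosh_sq_sub_sinh_sq x
  have h2cn : ((Real.cosh (2*x) : ℝ) : ℂ) ≠ 0 :=
    Complex.ofReal_ne_zero.mpr (Real.cosh_pos _).ne'
  -- plus case
  have hIpi : Complex.I * ((π:ℂ) / 4) = ((π/4 : ℝ):ℂ) * Complex.I := by push_cast; ring
  have hw : -Complex.I * Complex.tanh ((x:ℂ) + Complex.I * ((π:ℂ)/4)) =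
      (c - Complex.I * s) / (c + Complex.I * s) := by
    have hsinh : Complex.sinh ((x:ℂ) + Complex.I * ((π:ℂ)/4)) =
        ((Real.sqrt 2 / 2 : ℝ):ℂ) * (s + Complex.I * c) := by
      rw [hIpi, Complex.sinh_add, Complex.sinh_mul_I, Complex.cosh_mul_I,
        ← Complex.ofReal_sin, ← Complex.ofReal_cos, Real.sin_pi_div_four, Real.cos_pi_div_four,
        ← Complex.ofReal_sinh, ← Complex.ofReal_cosh, ← hc, ← hs]
      ring
    have hcosh : Complex.cosh ((x:ℂ) + Complex.I * ((π:ℂ)/4)) =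
        ((Real.sqrt 2 / 2 : ℝ):ℂ) * (c + Complex.I * s) := by
      rw [hIpi, Complex.cosh_add, Complex.sinh_mul_I, Complex.cosh_mul_I,
        ← Complex.ofReal_sin, ← Complex.ofReal_cos, Real.sin_pi_div_four, Real.cos_pi_div_four,
        ← Complex.ofReal_sinh, ← Complex.ofReal_cosh, ← hc, ← hs]
      ring
    have hnum : -Complex.I * (s + Complex.I * c) = c - Complex.I * s := by
      linear_combination (-c) * Complex.I_mul_I
    rw [Complex.tanh_eq_sinh_div_cosh, hsinh, hcosh, mul_div_mul_left _ _ ha,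
      ← hnum, mul_div_assoc]
  have hwne : (c - Complex.I * s) / (c + Complex.I * s) ≠ 0 := div_ne_zero hd2 hd1
  have hinv : ((c - Complex.I * s) / (c + Complex.I * s))⁻¹ =
      (c + Complex.I * s) / (c - Complex.I * s) := by
    rw [inv_div]
  -- minus case
  have hIpi' : ((x:ℂ) - Complex.I * ((π:ℂ)/4)) = (x:ℂ) + ((-(π/4) : ℝ):ℂ) * Complex.I := by
    push_cast; ring
  have hw' : -Complex.I * Complex.tanh ((x:ℂ) - Complex.I * ((π:ℂ)/4)) =
      (-(c + Complex.I * s)) / (c - Complex.I * s) := by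
    have hsinh : Complex.sinh ((x:ℂ) - Complex.I * ((π:ℂ)/4)) =
        ((Real.sqrt 2 / 2 : ℝ):ℂ) * (s - Complex.I * c) := by
      rw [hIpi', Complex.sinh_add, Complex.sinh_mul_I, Complex.cosh_mul_I,
        ← Complex.ofReal_sin, ← Complex.ofReal_cos, Real.sin_neg, Real.cos_neg,
        Real.sin_pi_div_four, Real.cos_pi_div_four,
        ← Complex.ofReal_sinh, ← Complex.ofReal_cosh, ← hc, ← hs]
      push_cast
      ring
    have hcosh : Complex.cosh ((x:ℂ) - Complex.I * ((π:ℂ)/4)) =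
        ((Real.sqrt 2 / 2 : ℝ):ℂ) * (c - Complex.I * s) := by
      rw [hIpi', Complex.cosh_add, Complex.sinh_mul_I, Complex.cosh_mul_I,
        ← Complex.ofReal_sin, ← Complex.ofReal_cos, Real.sin_neg, Real.cos_neg,
        Real.sin_pi_div_four, Real.cos_pi_div_four,
        ← Complex.ofReal_sinh, ← Complex.ofReal_cosh, ← hc, ← hs]
      push_cast
      ring
    have hnum : -Complex.I * (s - Complex.I * c) = -(c + Complex.I * s) := by
      linear_combination c * Complex.I_mul_I
    rw [Complex.tanh_eq_sinh_div_cosh, hsinh, hcosh, mul_div_mul_left _ _ ha,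
      ← hnum, mul_div_assoc]
  have hwne' : (-(c + Complex.I * s)) / (c - Complex.I * s) ≠ 0 :=
    div_ne_zero (neg_ne_zero.mpr hd1) hd2
  have hinv' : ((-(c + Complex.I * s)) / (c - Complex.I * s))⁻¹ =
      (-(c - Complex.I * s)) / (c + Complex.I * s) := by
    rw [inv_div, div_neg, neg_div, ← neg_div]
  have htanh : ((-Real.tanh (2 * x) : ℝ) : ℂ) =
      -(((Real.sinh (2*x) : ℝ):ℂ) / ((Real.cosh (2*x) : ℝ):ℂ)) := by
    rw [Real.tanh_eq_sinh_div_cosh]; push_cast; ring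
  have hcs : c^2 + s^2 ≠ 0 := h2c ▸ h2cn
  refine ⟨?_, ?_, fun _ => ⟨?_, ?_⟩⟩
  · rw [momentum, hw, sin_neg_I_log _ hwne, hinv, htanh, h2s, h2c]
    field_simp [hd1, hd2, hcs]
    ring_nf
    simp [Complex.I_sq]
    ring
  · rw [momentum, hw, cos_neg_I_log _ hwne, hinv, Complex.ofReal_div,
      Complex.ofReal_one, h2c]
    field_simp [hd1, hd2, hcs]
    ring_nf
    simp [Complex.I_sq]
    linear_combination (2*(c^2+s^2)) * h1
  · rw [momentum, hw', sin_neg_I_log _ hwne', hinv', htanh, h2s, h2c]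
    field_simp [hd1, hd2, hcs]
    ring_nf
    simp [Complex.I_sq]
    ring
  · rw [momentum, hw', cos_neg_I_log _ hwne', hinv', Complex.ofReal_neg,
      Complex.ofReal_div, Complex.ofReal_one, h2c]
    field_simp [hd1, hd2, hcs]
    ring_nf
    simp [Complex.I_sq]
    linear_combination (-2*(c^2+s^2)) * h1
end

section
/- Fix a real α > 1 and define g(λ) = i·(α·p(λ) + cos(p(λ))) with p(λ) = −i·Log(−i·tanh λ). Then for every real x the function g is complex differentiable at λ = x + iπ/4 with derivative g′(x + iπ/4) = −2i·(α + tanh(2x))/cosh(2x), and for every real x ≠ 0 it is complex differentiable at λ = x − iπ/4 with derivative g′(x − iπ/4) = 2i·(α + tanh(2x))/cosh(2x); in both cases the derivative is nonzero, so g has no saddle points on the lines ℝ ± iπ/4 (away from −iπ/4). -/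
open Complex Real

noncomputable def phase (α : ℝ) (l : ℂ) : ℂ :=
  Complex.I * ((α : ℂ) * momentum l + Complex.cos (momentum l))

namespace Complex

theorem cosh_ofReal_ne_zero (x : ℝ) : cosh (x : ℂ) ≠ 0 := by
  rw [← ofReal_cosh]
  exact ofReal_ne_zero.2 (Real.cosh_pos x).ne'

theorem hasDerivAt_tanh {z : ℂ} (hz : cosh z ≠ 0) : HasDerivAt tanh (1 / cosh z ^ 2) z := by
  have h := (hasDerivAt_sinh z).div (hasDerivAt_cosh z) hz
  rw [← sq, ← sq, cosh_sq_sub_sinh_sq] at h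
  exact h.congr_of_eventuallyEq (.of_forall fun w => tanh_eq_sinh_div_cosh w)

/-- `tanh` is `sinh / cosh` with `x / 0 = 0`, so it vanishes wherever `cosh` does. -/
theorem cosh_ne_zero_of_tanh_ne_zero {z : ℂ} (h : tanh z ≠ 0) : cosh z ≠ 0 :=
  fun hc => h (by rw [tanh_eq_sinh_div_cosh, hc, div_zero])

theorem sinh_ne_zero_of_tanh_ne_zero {z : ℂ} (h : tanh z ≠ 0) : sinh z ≠ 0 :=
  fun hs => h (by rw [tanh_eq_sinh_div_cosh, hs, zero_div])

/-- Where `sinh z` or `cosh z` vanishes, both sides are the junk value `0`. -/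
theorem tanh_eq_cosh_two_mul_sub_one_div (z : ℂ) : tanh z = (cosh (2 * z) - 1) / sinh (2 * z) := by
  rw [tanh_eq_sinh_div_cosh, sinh_two_mul, cosh_two_mul,
    show cosh z ^ 2 + sinh z ^ 2 - 1 = 2 * sinh z ^ 2 by linear_combination cosh_sq_sub_sinh_sq z]
  rcases eq_or_ne (sinh z) 0 with hs | hs
  · simp [hs]
  rcases eq_or_ne (cosh z) 0 with hc | hc
  · simp [hc]
  field_simp

theorem sinh_two_mul_add_I_pi_div_four (z : ℂ) :
    sinh (2 * (z + I * (π / 4))) = I * cosh (2 * z) := by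
  rw [show 2 * (z + I * (π / 4)) = 2 * z + π / 2 * I by ring]
  simp [sinh_add, sinh_mul_I, cosh_mul_I]
  ring

theorem cosh_two_mul_add_I_pi_div_four (z : ℂ) :
    cosh (2 * (z + I * (π / 4))) = I * sinh (2 * z) := by
  rw [show 2 * (z + I * (π / 4)) = 2 * z + π / 2 * I by ring]
  simp [cosh_add, sinh_mul_I, cosh_mul_I]
  ring

theorem sinh_two_mul_sub_I_pi_div_four (z : ℂ) :
    sinh (2 * (z - I * (π / 4))) = -I * cosh (2 * z) := by
  rw [show 2 * (z - I * (π / 4)) = 2 * z - π / 2 * I by ring]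
  simp [sinh_sub, sinh_mul_I, cosh_mul_I]
  ring

theorem cosh_two_mul_sub_I_pi_div_four (z : ℂ) :
    cosh (2 * (z - I * (π / 4))) = -I * sinh (2 * z) := by
  rw [show 2 * (z - I * (π / 4)) = 2 * z - π / 2 * I by ring]
  simp [cosh_sub, sinh_mul_I, cosh_mul_I]
  ring

end Complex

theorem sin_momentum {l : ℂ} (hl : tanh l ≠ 0) :
    sin (momentum l) = -cosh (2 * l) / sinh (2 * l) := by
  have hw : -I * tanh l ≠ 0 := mul_ne_zero (neg_ne_zero.2 I_ne_zero) hl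
  have hexp : exp (momentum l * I) = -I * tanh l := by
    rw [momentum, show -I * log (-I * tanh l) * I = log (-I * tanh l) by
      linear_combination (-log (-I * tanh l)) * I_sq, exp_log hw]
  have hsin : sin (momentum l) = (exp (-(momentum l * I)) - exp (momentum l * I)) * I / 2 := by
    rw [Complex.sin, neg_mul]
  have hc := cosh_ne_zero_of_tanh_ne_zero hl
  have hs := sinh_ne_zero_of_tanh_ne_zero hl
  rw [hsin, Complex.exp_neg, hexp, Complex.tanh_eq_sinh_div_cosh, Complex.sinh_two_mul,
    Complex.cosh_two_mul]
  field_simp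
  linear_combination Complex.sinh l ^ 2 * I_sq

theorem hasDerivAt_momentum {l : ℂ} (hl : -I * tanh l ∈ slitPlane) :
    HasDerivAt momentum (-2 * I / sinh (2 * l)) l := by
  have ht : tanh l ≠ 0 := right_ne_zero_of_mul (slitPlane_ne_zero hl)
  have hc := cosh_ne_zero_of_tanh_ne_zero ht
  have hs := sinh_ne_zero_of_tanh_ne_zero ht
  refine ((((hasDerivAt_tanh hc).const_mul (-I)).clog hl).const_mul (-I)).congr_deriv ?_
  rw [Complex.tanh_eq_sinh_div_cosh, Complex.sinh_two_mul]
  field_simp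

theorem hasDerivAt_phase (α : ℝ) {l : ℂ} (hl : -I * tanh l ∈ slitPlane) :
    HasDerivAt (phase α) (2 * (α + cosh (2 * l) / sinh (2 * l)) / sinh (2 * l)) l := by
  have hp := hasDerivAt_momentum hl
  refine (((hp.const_mul (α : ℂ)).add hp.ccos).const_mul I).congr_deriv ?_
  rw [sin_momentum (right_ne_zero_of_mul (slitPlane_ne_zero hl))]
  linear_combination (-2 * (α + cosh (2 * l) / sinh (2 * l)) / sinh (2 * l)) * I_sq

theorem neg_I_mul_tanh_add_I_pi_div_four (x : ℝ) :
    -I * tanh (x + I * (π / 4)) = ((Real.cosh (2 * x))⁻¹ : ℝ) - (Real.tanh (2 * x) : ℝ) * I := by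
  have hc := cosh_ofReal_ne_zero (2 * x)
  push_cast at hc ⊢
  rw [tanh_eq_cosh_two_mul_sub_one_div, sinh_two_mul_add_I_pi_div_four,
    cosh_two_mul_add_I_pi_div_four, Complex.tanh_eq_sinh_div_cosh]
  field_simp
  ring

theorem neg_I_mul_tanh_sub_I_pi_div_four (x : ℝ) :
    -I * tanh (x - I * (π / 4)) = (-(Real.cosh (2 * x))⁻¹ : ℝ) - (Real.tanh (2 * x) : ℝ) * I := by
  have hc := cosh_ofReal_ne_zero (2 * x)
  push_cast at hc ⊢
  rw [tanh_eq_cosh_two_mul_sub_one_div, sinh_two_mul_sub_I_pi_div_four,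
    cosh_two_mul_sub_I_pi_div_four, Complex.tanh_eq_sinh_div_cosh]
  field_simp
  ring

theorem hasDerivAt_phase_add_I_pi_div_four (α x : ℝ) :
    HasDerivAt (phase α) (-2 * I * ((α : ℂ) + (Real.tanh (2 * x) : ℂ)) / (Real.cosh (2 * x) : ℂ))
      (x + I * (π / 4)) := by
  have hslit : -I * tanh (x + I * (π / 4)) ∈ slitPlane := by
    rw [neg_I_mul_tanh_add_I_pi_div_four, mem_slitPlane_iff]
    left
    simp only [sub_re, mul_re, ofReal_re, ofReal_im, I_re, I_im]
    simpa using Real.cosh_pos (2 * x)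
  refine (hasDerivAt_phase α hslit).congr_deriv ?_
  have hc := cosh_ofReal_ne_zero (2 * x)
  push_cast at hc ⊢
  rw [sinh_two_mul_add_I_pi_div_four, cosh_two_mul_add_I_pi_div_four,
    Complex.tanh_eq_sinh_div_cosh]
  field_simp
  linear_combination ((α : ℂ) * cosh (2 * (x : ℂ)) + sinh (2 * (x : ℂ))) * I_sq

theorem hasDerivAt_phase_sub_I_pi_div_four (α : ℝ) {x : ℝ} (hx : x ≠ 0) :
    HasDerivAt (phase α) (2 * I * ((α : ℂ) + (Real.tanh (2 * x) : ℂ)) / (Real.cosh (2 * x) : ℂ))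
      (x - I * (π / 4)) := by
  have hslit : -I * tanh (x - I * (π / 4)) ∈ slitPlane := by
    rw [neg_I_mul_tanh_sub_I_pi_div_four, mem_slitPlane_iff]
    right
    simp only [sub_im, mul_im, ofReal_re, ofReal_im, I_re, I_im]
    simpa [Real.tanh_eq_sinh_div_cosh, (Real.cosh_pos _).ne'] using hx
  refine (hasDerivAt_phase α hslit).congr_deriv ?_
  have hc := cosh_ofReal_ne_zero (2 * x)
  push_cast at hc ⊢
  rw [sinh_two_mul_sub_I_pi_div_four, cosh_two_mul_sub_I_pi_div_four,
    Complex.tanh_eq_sinh_div_cosh]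
  field_simp
  linear_combination (-((α : ℂ) * cosh (2 * (x : ℂ)) + sinh (2 * (x : ℂ)))) * I_sq

theorem two_mul_I_mul_add_tanh_div_cosh_ne_zero {α : ℝ} (hα : 1 ≤ α) (x : ℝ) :
    2 * I * ((α : ℂ) + (Real.tanh x : ℂ)) / (Real.cosh x : ℂ) ≠ 0 := by
  have hpos : 0 < α + Real.tanh x := by linarith [Real.neg_one_lt_tanh x]
  rw [← ofReal_add]
  exact div_ne_zero (mul_ne_zero (mul_ne_zero two_ne_zero I_ne_zero) (ofReal_ne_zero.2 hpos.ne'))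
    (ofReal_ne_zero.2 (Real.cosh_pos x).ne')

/-- For `α > 1`, `g` is complex differentiable on the lines `ℝ ± iπ/4` (away from
`-iπ/4`) with derivative `g'(x ± iπ/4) = ∓2i(α + tanh(2x))/cosh(2x) ≠ 0`: there are no
saddle points on these lines. -/
theorem phase_deriv_on_lines (α : ℝ) (hα : 1 < α) :
    (∀ x : ℝ,
      HasDerivAt (phase α)
        (-2 * Complex.I * ((α : ℂ) + (Real.tanh (2 * x) : ℂ)) / (Real.cosh (2 * x) : ℂ))
        (x + Complex.I * (π / 4)) ∧
      -2 * Complex.I * ((α : ℂ) + (Real.tanh (2 * x) : ℂ)) / (Real.cosh (2 * x) : ℂ) ≠ 0) ∧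
    (∀ x : ℝ, x ≠ 0 →
      HasDerivAt (phase α)
        (2 * Complex.I * ((α : ℂ) + (Real.tanh (2 * x) : ℂ)) / (Real.cosh (2 * x) : ℂ))
        (x - Complex.I * (π / 4)) ∧
      2 * Complex.I * ((α : ℂ) + (Real.tanh (2 * x) : ℂ)) / (Real.cosh (2 * x) : ℂ) ≠ 0) := by
  have hne (x : ℝ) := two_mul_I_mul_add_tanh_div_cosh_ne_zero hα.le (2 * x)
  refine ⟨fun x => ⟨hasDerivAt_phase_add_I_pi_div_four α x, ?_⟩,
    fun x hx => ⟨hasDerivAt_phase_sub_I_pi_div_four α hx, hne x⟩⟩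
  rw [neg_mul, neg_mul, neg_div, neg_ne_zero]
  exact hne x
end

section
/- Let α be any real number and p(λ) = −i·Log(−i·tanh λ). Then for every real x the real part of g(λ) = i·(α·p(λ) + cos(p(λ))) vanishes at λ = x + iπ/4, and for every real x ≠ 0 it vanishes at λ = x − iπ/4; that is, Re g = 0 on the lines ℝ ± iπ/4 (away from −iπ/4). -/
open Complex Real

/-!
Since `|cosh (x + iy)|² - |sinh (x + iy)|² = cos 2y`, on the lines `Im λ = ±π/4` the number
`-i tanh λ` lies on the unit circle. Its principal logarithm is then purely imaginary, so the
momentum `p(λ)` is real and `g(λ) = i (α p + cos p)` is purely imaginary.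
-/

namespace Complex

lemma normSq_sinh_add_mul_I (x y : ℝ) :
    normSq (sinh (x + y * I)) = Real.sinh x ^ 2 + Real.sin y ^ 2 := by
  rw [sinh_add, sinh_mul_I, cosh_mul_I, ← ofReal_sinh, ← ofReal_cosh, ← ofReal_sin,
    ← ofReal_cos, ← mul_assoc, ← ofReal_mul, ← ofReal_mul, normSq_add_mul_I]
  nlinarith [Real.cosh_sq x, Real.sin_sq_add_cos_sq y]

lemma normSq_cosh_add_mul_I (x y : ℝ) :
    normSq (cosh (x + y * I)) = Real.sinh x ^ 2 + Real.cos y ^ 2 := by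
  rw [cosh_add, sinh_mul_I, cosh_mul_I, ← ofReal_sinh, ← ofReal_cosh, ← ofReal_sin,
    ← ofReal_cos, ← mul_assoc, ← ofReal_mul, ← ofReal_mul, normSq_add_mul_I]
  nlinarith [Real.cosh_sq x, Real.sin_sq_add_cos_sq y]

lemma norm_tanh_add_mul_I_eq_one (x : ℝ) {y : ℝ} (hy : Real.cos (2 * y) = 0) :
    ‖tanh (x + y * I)‖ = 1 := by
  have hsq : Real.sin y ^ 2 = Real.cos y ^ 2 := by rw [Real.cos_two_mul'] at hy; linarith
  have hcos : Real.cos y ^ 2 ≠ 0 := by nlinarith [Real.sin_sq_add_cos_sq y]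
  have hcosh : 0 < normSq (cosh (x + y * I)) := by
    rw [normSq_cosh_add_mul_I]; positivity
  rw [tanh_eq_sinh_div_cosh, norm_div, norm_def, norm_def, normSq_sinh_add_mul_I, hsq,
    ← normSq_cosh_add_mul_I, div_self (Real.sqrt_pos.mpr hcosh).ne']

end Complex

lemma momentum_im (l : ℂ) : (momentum l).im = -Real.log ‖Complex.tanh l‖ := by
  simp [momentum, Complex.log_re]

lemma phase_re_eq_zero_of_momentum_im_eq_zero (α : ℝ) {l : ℂ} (h : (momentum l).im = 0) :
    (phase α l).re = 0 := by
  have hreal : momentum l = ((momentum l).re : ℂ) := Complex.ext rfl (by simp [h])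
  rw [phase, hreal, ← Complex.ofReal_cos, ← Complex.ofReal_mul, ← Complex.ofReal_add,
    Complex.I_mul_re, Complex.ofReal_im, neg_zero]

lemma phase_re_eq_zero_of_cos_two_mul_eq_zero (α x : ℝ) {y : ℝ} (hy : Real.cos (2 * y) = 0) :
    (phase α (x + y * Complex.I)).re = 0 :=
  phase_re_eq_zero_of_momentum_im_eq_zero α <| by
    rw [momentum_im, Complex.norm_tanh_add_mul_I_eq_one x hy, Real.log_one, neg_zero]

/-- For any real `α`, the real part of the phase function `g` vanishes on the lines
`ℝ ± iπ/4` (away from the point `-iπ/4`). -/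
theorem re_phase_vanishes_on_lines (α : ℝ) :
    ∀ x : ℝ,
      (phase α (x + Complex.I * (π / 4))).re = 0 ∧
      (x ≠ 0 → (phase α (x - Complex.I * (π / 4))).re = 0) := by
  intro x
  have hplus : Real.cos (2 * (π / 4)) = 0 := by
    rw [show 2 * (π / 4) = π / 2 by ring, Real.cos_pi_div_two]
  have hminus : Real.cos (2 * -(π / 4)) = 0 := by rw [mul_neg, Real.cos_neg, hplus]
  refine ⟨?_, fun _ => ?_⟩
  · convert phase_re_eq_zero_of_cos_two_mul_eq_zero α x hplus using 3
    push_cast; ring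
  · convert phase_re_eq_zero_of_cos_two_mul_eq_zero α x hminus using 3
    push_cast; ring
end

section
/- Let φ > 0 be real, set α = coth(2φ), and let λ = x + iy with x, y real and cosh(4λ) ≠ 1. Then the function G(λ) = (2/sinh(2λ))·(α + coth(2λ)) satisfies −Im G(λ) = (4/(sinh(2φ)·|cosh(4λ) − 1|²))·( sinh(4x)·sinh(2(x+φ))·cos(2y)·sin(4y) − (cosh(4x)·cos(4y) − 1)·cosh(2(x+φ))·sin(2y) ). -/
open Complex Real

/-- The analytic continuation of the derivative of the phase function:
`G(λ) = (2/sinh(2λ)) (α + coth(2λ))`. -/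
noncomputable def phaseDeriv (α : ℝ) (l : ℂ) : ℂ :=
  (2 / Complex.sinh (2 * l)) * ((α : ℂ) + Complex.cosh (2 * l) / Complex.sinh (2 * l))

/-!
Writing `α = coth 2φ`, the addition formula
`cosh 2φ sinh 2λ + sinh 2φ cosh 2λ = sinh (2λ + 2φ)` and `2 sinh² 2λ = cosh 4λ - 1` collapse
`G` to `4 sinh (2λ + 2φ) / (sinh 2φ (cosh 4λ - 1))`.
The formula is then `-Im (w / z) = (Re w Im z - Im w Re z) / |z|²` with the real and imaginary
parts of `sinh` and `cosh` at `a + b i`.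
-/

namespace Complex

lemma sinh_ofReal_add_ofReal_mul_I_re (a b : ℝ) :
    (sinh (a + b * I)).re = Real.sinh a * Real.cos b := by
  simp [sinh_add, sinh_mul_I, cosh_mul_I, ← ofReal_sinh, ← ofReal_cosh, ← ofReal_cos,
    ← ofReal_sin]

lemma sinh_ofReal_add_ofReal_mul_I_im (a b : ℝ) :
    (sinh (a + b * I)).im = Real.cosh a * Real.sin b := by
  simp [sinh_add, sinh_mul_I, cosh_mul_I, ← ofReal_sinh, ← ofReal_cosh, ← ofReal_cos,
    ← ofReal_sin]

lemma cosh_ofReal_add_ofReal_mul_I_re (a b : ℝ) :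
    (cosh (a + b * I)).re = Real.cosh a * Real.cos b := by
  simp [cosh_add, sinh_mul_I, cosh_mul_I, ← ofReal_sinh, ← ofReal_cosh, ← ofReal_cos,
    ← ofReal_sin]

lemma cosh_ofReal_add_ofReal_mul_I_im (a b : ℝ) :
    (cosh (a + b * I)).im = Real.sinh a * Real.sin b := by
  simp [cosh_add, sinh_mul_I, cosh_mul_I, ← ofReal_sinh, ← ofReal_cosh, ← ofReal_cos,
    ← ofReal_sin]

lemma cosh_four_mul_sub_one (z : ℂ) : cosh (4 * z) - 1 = 2 * sinh (2 * z) ^ 2 := by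
  rw [show 4 * z = 2 * (2 * z) by ring, cosh_two_mul, cosh_sq]
  ring

lemma neg_im_div (w z : ℂ) : -(w / z).im = (w.re * z.im - w.im * z.re) / ‖z‖ ^ 2 := by
  rw [div_im, ← normSq_eq_norm_sq]
  ring

end Complex

lemma phaseDeriv_coth (t : ℝ) (ht : Real.sinh t ≠ 0) (l : ℂ) :
    phaseDeriv (Real.cosh t / Real.sinh t) l =
      ((4 / Real.sinh t : ℝ) : ℂ) *
        (Complex.sinh (2 * l + t) / (Complex.cosh (4 * l) - 1)) := by
  rw [Complex.cosh_four_mul_sub_one, Complex.sinh_add, phaseDeriv]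
  by_cases hs : Complex.sinh (2 * l) = 0
  · -- both sides are `0` by the convention `x / 0 = 0`
    simp [hs]
  have htC : Complex.sinh t ≠ 0 := by rw [← Complex.ofReal_sinh]; exact_mod_cast ht
  push_cast
  field_simp
  ring

theorem im_phaseDeriv_formula_general (φ : ℝ) (hφ : 0 < φ) (α : ℝ)
    (hα : α = Real.cosh (2 * φ) / Real.sinh (2 * φ)) (x y : ℝ) :
    -(phaseDeriv α ((x : ℂ) + Complex.I * (y : ℂ))).im =
      (4 / (Real.sinh (2 * φ) *
        ‖Complex.cosh (4 * ((x : ℂ) + Complex.I * (y : ℂ))) - 1‖ ^ 2)) *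
      (Real.sinh (4 * x) * Real.sinh (2 * (x + φ)) * Real.cos (2 * y) * Real.sin (4 * y)
        - (Real.cosh (4 * x) * Real.cos (4 * y) - 1) * Real.cosh (2 * (x + φ))
          * Real.sin (2 * y)) := by
  have hsinh : Real.sinh (2 * φ) ≠ 0 := (Real.sinh_pos_iff.2 (by linarith)).ne'
  have hsum :
      2 * ((x : ℂ) + I * y) + ((2 * φ : ℝ) : ℂ) = ((2 * (x + φ) : ℝ) : ℂ) + (2 * y : ℝ) * I := by
    push_cast; ring
  have hquad : 4 * ((x : ℂ) + I * y) = ((4 * x : ℝ) : ℂ) + (4 * y : ℝ) * I := by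
    push_cast; ring
  rw [hα, phaseDeriv_coth _ hsinh, Complex.im_ofReal_mul, neg_mul_eq_mul_neg,
    Complex.neg_im_div, hsum, hquad]
  simp only [Complex.sub_re, Complex.sub_im, Complex.one_re, Complex.one_im,
    Complex.sinh_ofReal_add_ofReal_mul_I_re, Complex.sinh_ofReal_add_ofReal_mul_I_im,
    Complex.cosh_ofReal_add_ofReal_mul_I_re, Complex.cosh_ofReal_add_ofReal_mul_I_im]
  ring

/-- For `φ > 0`, `α = coth(2φ)` and `λ = x + iy` with `cosh(4λ) ≠ 1`:
`-Im G(λ) = (4/(sinh(2φ)|cosh(4λ) - 1|²)) (sinh(4x) sinh(2(x+φ)) cos(2y) sin(4y)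
  - (cosh(4x) cos(4y) - 1) cosh(2(x+φ)) sin(2y))`. -/
theorem im_phaseDeriv_formula (φ : ℝ) (hφ : 0 < φ) (α : ℝ)
    (hα : α = Real.cosh (2 * φ) / Real.sinh (2 * φ)) (x y : ℝ)
    (hl : Complex.cosh (4 * ((x : ℂ) + Complex.I * (y : ℂ))) ≠ 1) :
    -(phaseDeriv α ((x : ℂ) + Complex.I * (y : ℂ))).im =
      (4 / (Real.sinh (2 * φ) *
        ‖Complex.cosh (4 * ((x : ℂ) + Complex.I * (y : ℂ))) - 1‖ ^ 2)) *
      (Real.sinh (4 * x) * Real.sinh (2 * (x + φ)) * Real.cos (2 * y) * Real.sin (4 * y)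
        - (Real.cosh (4 * x) * Real.cos (4 * y) - 1) * Real.cosh (2 * (x + φ))
          * Real.sin (2 * y)) :=
  im_phaseDeriv_formula_general φ hφ α hα x y
end

section
/- For all real x, y, φ the following identity holds: sinh(4x)·sinh(2(x+φ))·cos(2y)·sin(4y) − (cosh(4x)·cos(4y) − 1)·cosh(2(x+φ))·sin(2y) = sin(2y)·( sinh(4x)·sinh(2(x+φ)) + cosh(2(x+φ)) − cosh(2(x−φ))·cos(4y) ). In particular, the left-hand side vanishes if and only if sin(2y)·cosh(2(x−φ))·( (sinh(4x)·sinh(2(x+φ)) + cosh(2(x+φ)))/cosh(2(x−φ)) − cos(4y) ) = 0. -/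
open Real

/-- Real trigonometric–hyperbolic identity factorizing the numerator of `∂_y Re g`:
`sinh(4x) sinh(2(x+φ)) cos(2y) sin(4y) - (cosh(4x) cos(4y) - 1) cosh(2(x+φ)) sin(2y)
 = sin(2y) (sinh(4x) sinh(2(x+φ)) + cosh(2(x+φ)) - cosh(2(x-φ)) cos(4y))`,
and hence the left-hand side vanishes iff
`sin(2y) cosh(2(x-φ)) ((sinh(4x) sinh(2(x+φ)) + cosh(2(x+φ)))/cosh(2(x-φ)) - cos(4y)) = 0`. -/
theorem numerator_factorization (x y φ : ℝ) :
    (Real.sinh (4 * x) * Real.sinh (2 * (x + φ)) * Real.cos (2 * y) * Real.sin (4 * y)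
        - (Real.cosh (4 * x) * Real.cos (4 * y) - 1) * Real.cosh (2 * (x + φ))
          * Real.sin (2 * y)
      = Real.sin (2 * y) *
          (Real.sinh (4 * x) * Real.sinh (2 * (x + φ)) + Real.cosh (2 * (x + φ))
            - Real.cosh (2 * (x - φ)) * Real.cos (4 * y))) ∧
    (Real.sinh (4 * x) * Real.sinh (2 * (x + φ)) * Real.cos (2 * y) * Real.sin (4 * y)
        - (Real.cosh (4 * x) * Real.cos (4 * y) - 1) * Real.cosh (2 * (x + φ))
          * Real.sin (2 * y) = 0
      ↔ Real.sin (2 * y) * Real.cosh (2 * (x - φ)) *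
          ((Real.sinh (4 * x) * Real.sinh (2 * (x + φ)) + Real.cosh (2 * (x + φ)))
              / Real.cosh (2 * (x - φ))
            - Real.cos (4 * y)) = 0) := by
  have hc : Real.cosh (2 * (x - φ)) ≠ 0 := ne_of_gt (Real.cosh_pos _)
  have key : Real.sinh (4 * x) * Real.sinh (2 * (x + φ)) * Real.cos (2 * y) * Real.sin (4 * y)
        - (Real.cosh (4 * x) * Real.cos (4 * y) - 1) * Real.cosh (2 * (x + φ))
          * Real.sin (2 * y)
      = Real.sin (2 * y) *
          (Real.sinh (4 * x) * Real.sinh (2 * (x + φ)) + Real.cosh (2 * (x + φ))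
            - Real.cosh (2 * (x - φ)) * Real.cos (4 * y)) := by
    have h4 : (4 : ℝ) * x = 2 * (x + φ) + 2 * (x - φ) := by ring
    have hm : (2 : ℝ) * (x - φ) = 4 * x - 2 * (x + φ) := by ring
    have hs4 : Real.sin (4 * y) = 2 * Real.sin (2 * y) * Real.cos (2 * y) := by
      rw [show (4 : ℝ) * y = 2 * (2 * y) by ring, Real.sin_two_mul]
    have hc4 : Real.cos (4 * y) = 2 * Real.cos (2 * y) ^ 2 - 1 := by
      rw [show (4 : ℝ) * y = 2 * (2 * y) by ring, Real.cos_two_mul]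
    rw [hm, Real.cosh_sub, h4, Real.cosh_add, Real.sinh_add, hs4, hc4]
    have hpy : Real.sinh (2 * (x + φ)) ^ 2 = Real.cosh (2 * (x + φ)) ^ 2 - 1 := by
      have := Real.cosh_sq_sub_sinh_sq (2 * (x + φ)); nlinarith
    have hmy : Real.sinh (2 * (x - φ)) ^ 2 = Real.cosh (2 * (x - φ)) ^ 2 - 1 := by
      have := Real.cosh_sq_sub_sinh_sq (2 * (x - φ)); nlinarith
    ring_nf
  refine ⟨key, ?_⟩
  rw [key]
  have hdiv : Real.sin (2 * y) * Real.cosh (2 * (x - φ)) *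
      ((Real.sinh (4 * x) * Real.sinh (2 * (x + φ)) + Real.cosh (2 * (x + φ)))
          / Real.cosh (2 * (x - φ)) - Real.cos (4 * y))
    = Real.sin (2 * y) *
        (Real.sinh (4 * x) * Real.sinh (2 * (x + φ)) + Real.cosh (2 * (x + φ))
          - Real.cosh (2 * (x - φ)) * Real.cos (4 * y)) := by
    field_simp
  rw [hdiv]
end

section
/- Fix a real α > 1 and set G(λ) = (2/sinh(2λ))·(α + coth(2λ)). There exists R > 0 such that for all real x, y with |x| ≥ R and −π/4 < y < 3π/4: if Im G(x + iy) = 0 then y = 0 or y = π/2. That is, for |Re λ| large enough, the only zeros of ∂_y Re g(λ) in the fundamental strip lie on the lines Im λ = 0 and Im λ = π/2. -/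
open Complex Real

set_option maxHeartbeats 1000000 in
/-- For `α > 1` there is an `R > 0` such that for `|Re λ| ≥ R` the only zeros of
`∂_y Re g(λ) = -Im G(λ)` in the fundamental strip `-π/4 < Im λ < 3π/4` lie on the
lines `Im λ = 0` and `Im λ = π/2`. -/
theorem im_phaseDeriv_zeros_far_out (α : ℝ) (hα : 1 < α) :
    ∃ R > (0 : ℝ), ∀ x y : ℝ, R ≤ |x| → -(π / 4) < y → y < 3 * π / 4 →
      (phaseDeriv α ((x : ℂ) + Complex.I * (y : ℂ))).im = 0 → y = 0 ∨ y = π / 2 := by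
  set M : ℝ := Real.sqrt (2 / (α - 1)) + 1 with hMdef
  have hMpos : 0 < M := by positivity
  refine ⟨Real.arsinh M, Real.arsinh_pos_iff.mpr hMpos, ?_⟩
  intro x y hx hy1 hy2 h
  set sx := Real.sinh (2 * x) with hsxd
  set cx := Real.cosh (2 * x) with hcxd
  set sy := Real.sin (2 * y) with hsyd
  set cy := Real.cos (2 * y) with hcyd
  have hP : cx ^ 2 = sx ^ 2 + 1 := Real.cosh_sq (2 * x)
  have hQ : sy ^ 2 + cy ^ 2 = 1 := Real.sin_sq_add_cos_sq (2 * y)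
  have hcxpos : 0 < cx := Real.cosh_pos (2 * x)
  -- |sx| is large
  have hMle : M ≤ |sx| := by
    have h1 : Real.arsinh M ≤ 2 * |x| := by
      have := Real.arsinh_pos_iff.mpr hMpos
      nlinarith
    have h2 : Real.sinh (Real.arsinh M) ≤ Real.sinh (2 * |x|) := Real.sinh_le_sinh.mpr h1
    rw [Real.sinh_arsinh] at h2
    calc M ≤ Real.sinh (2 * |x|) := h2
      _ = Real.sinh |2 * x| := by rw [abs_mul]; norm_num
      _ = |sx| := (Real.abs_sinh (2 * x)).symm
  have hsq : 2 < (α - 1) * sx ^ 2 := by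
    have hα1' : (0:ℝ) < α - 1 := by linarith
    have hnn : (0:ℝ) ≤ 2 / (α - 1) := div_nonneg (by norm_num) hα1'.le
    have hs : Real.sqrt (2 / (α - 1)) ^ 2 = 2 / (α - 1) := Real.sq_sqrt hnn
    have hsqrtlt : Real.sqrt (2 / (α - 1)) < |sx| := by
      rw [hMdef] at hMle; linarith
    have h2 : 2 / (α - 1) < sx ^ 2 := by
      have := Real.sqrt_nonneg (2 / (α - 1))
      nlinarith [_root_.sq_abs sx]
    have hα1 : 0 < α - 1 := by linarith
    calc (2:ℝ) = (α - 1) * (2 / (α - 1)) := by field_simp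
      _ < (α - 1) * sx ^ 2 := by exact (mul_lt_mul_iff_right₀ hα1).mpr h2
  have hsxne : sx ≠ 0 := by
    intro h0
    rw [h0, abs_zero] at hMle; linarith
  -- compute sinh and cosh of 2(x+iy)
  have e : (2:ℂ) * ((x:ℂ) + Complex.I * y) = ((2*x:ℝ):ℂ) + ((2*y:ℝ):ℂ) * Complex.I := by
    push_cast; ring
  have hs : Complex.sinh (2 * ((x:ℂ) + Complex.I * y))
      = ((sx * cy : ℝ) : ℂ) + ((cx * sy : ℝ) : ℂ) * Complex.I := by
    rw [e, Complex.sinh_add, Complex.sinh_mul_I, Complex.cosh_mul_I, hsxd, hcxd, hsyd, hcyd]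
    push_cast; ring
  have hc : Complex.cosh (2 * ((x:ℂ) + Complex.I * y))
      = ((cx * cy : ℝ) : ℂ) + ((sx * sy : ℝ) : ℂ) * Complex.I := by
    rw [e, Complex.cosh_add, Complex.sinh_mul_I, Complex.cosh_mul_I, hsxd, hcxd, hsyd, hcyd]
    push_cast; ring
  have hs0 : Complex.sinh (2 * ((x:ℂ) + Complex.I * y)) ≠ 0 := by
    rw [hs]
    intro h0
    have hre := congrArg Complex.re h0
    have him := congrArg Complex.im h0
    simp [Complex.add_re, Complex.add_im, Complex.mul_re, Complex.mul_im] at hre him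
    have hcy0 : cy = 0 := by
      rcases hre with h' | h'
      · exact absurd h' hsxne
      · exact h'
    have hsy0 : sy = 0 := by
      rcases him with h' | h'
      · exact absurd h' (ne_of_gt hcxpos)
      · exact h'
    rw [hcy0, hsy0] at hQ; norm_num at hQ
  -- rewrite phaseDeriv as a single quotient
  have hd : phaseDeriv α ((x:ℂ) + Complex.I * y)
      = (2 * (α:ℂ) * Complex.sinh (2 * ((x:ℂ) + Complex.I * y))
          + 2 * Complex.cosh (2 * ((x:ℂ) + Complex.I * y)))
        / (Complex.sinh (2 * ((x:ℂ) + Complex.I * y))) ^ 2 := by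
    rw [phaseDeriv]
    field_simp
  rw [hd, Complex.div_im, div_sub_div_same, div_eq_zero_iff] at h
  have hns : Complex.normSq ((Complex.sinh (2 * ((x:ℂ) + Complex.I * y))) ^ 2) ≠ 0 :=
    fun hz => (pow_ne_zero 2 hs0) (Complex.normSq_eq_zero.mp hz)
  rcases h with h | h
  swap
  · exact absurd h hns
  rw [hs, hc] at h
  simp only [sq, Complex.mul_re, Complex.mul_im, Complex.add_re, Complex.add_im,
    Complex.ofReal_re, Complex.ofReal_im, Complex.I_re, Complex.I_im,
    Complex.re_ofNat, Complex.im_ofNat] at h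
  -- the key factorization
  have key : sy * (α * cx * (sx ^ 2 + sy ^ 2) + sx * (cx ^ 2 + cy ^ 2)) = 0 := by
    linear_combination (-(1:ℝ)/2) * h
      + (sy * (-(α * cx * sy ^ 2) - sx * cy ^ 2)) * hP
      + (sy * (-(α * cx * sx ^ 2) - sx * cx ^ 2)) * hQ
  have hF : 0 < α * cx * (sx ^ 2 + sy ^ 2) + sx * (cx ^ 2 + cy ^ 2) := by
    rcases lt_or_gt_of_ne hsxne with hneg | hpos
    · -- sx < 0
      have hcxgt : -sx < cx := by nlinarith
      have hcube : 0 < (-sx) * ((α - 1) * sx ^ 2 - 2) :=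
        mul_pos (by linarith) (by linarith)
      have hA : sx * cx ^ 2 = sx ^ 3 + sx := by linear_combination sx * hP
      have hB : sx * cy ^ 2 = sx - sx * sy ^ 2 := by linear_combination sx * hQ
      have hb2 : 0 ≤ α * cx * sy ^ 2 := by positivity
      have hb1 : 0 ≤ (-sx) * sy ^ 2 := mul_nonneg (by linarith) (sq_nonneg sy)
      have hb3 : α * ((-sx) * sx ^ 2) ≤ α * (cx * sx ^ 2) :=
        mul_le_mul_of_nonneg_left
          (mul_le_mul_of_nonneg_right hcxgt.le (sq_nonneg sx)) (by linarith)
      nlinarith [hA, hB, hb2, hb1, hb3, hcube]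
    · -- sx > 0
      have h1 : 0 < α * cx * sx ^ 2 := by positivity
      have hb2 : 0 ≤ α * cx * sy ^ 2 := by positivity
      have hb3 : 0 ≤ sx * cx ^ 2 := by positivity
      have hb4 : 0 ≤ sx * cy ^ 2 := mul_nonneg hpos.le (sq_nonneg cy)
      nlinarith [h1, hb2, hb3, hb4]
  have hsy0 : sy = 0 := by
    rcases mul_eq_zero.mp key with h' | h'
    · exact h'
    · exact absurd h' (ne_of_gt hF)
  -- conclude from sin (2y) = 0
  rw [hsyd] at hsy0
  obtain ⟨n, hn⟩ := Real.sin_eq_zero_iff.mp hsy0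
  have hpi := Real.pi_pos
  have hnub : n ≤ 1 := by
    by_contra hcon
    push_neg at hcon
    have h2n : (2:ℤ) ≤ n := by omega
    have : (2:ℝ) ≤ (n:ℝ) := by exact_mod_cast h2n
    nlinarith
  have hnlb : 0 ≤ n := by
    by_contra hcon
    push_neg at hcon
    have h2n : n ≤ (-1:ℤ) := by omega
    have : (n:ℝ) ≤ -1 := by exact_mod_cast h2n
    nlinarith
  interval_cases n
  · left
    simp at hn
    linarith
  · right
    simp at hn
    linarith
end

section
/- Fix a real α > 1 and set G(λ) = (2/sinh(2λ))·(α + coth(2λ)). There exists R > 0 such that for all real x with |x| ≥ R: −Im G(x + iy) > 0 for all y ∈ (0, π/2), and −Im G(x + iy) < 0 for all y ∈ (−π/4, 0) ∪ (π/2, 3π/4). That is, for |Re λ| ≥ R the derivative ∂_y Re g is strictly positive for Im λ ∈ (0, π/2) and strictly negative for Im λ ∈ (−π/4, 0) ∪ (π/2, 3π/4). -/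
open Complex Real

lemma sinh_decomp' (x y : ℝ) :
    Complex.sinh ((2*x:ℝ) + (2*y:ℝ)*I)
      = ((Real.sinh (2*x) * Real.cos (2*y) : ℝ) : ℂ)
        + ((Real.cosh (2*x) * Real.sin (2*y) : ℝ) : ℂ) * I := by
  rw [Complex.sinh_add, Complex.sinh_mul_I, Complex.cosh_mul_I]; push_cast; ring

lemma cosh_decomp' (x y : ℝ) :
    Complex.cosh ((2*x:ℝ) + (2*y:ℝ)*I)
      = ((Real.cosh (2*x) * Real.cos (2*y) : ℝ) : ℂ)
        + ((Real.sinh (2*x) * Real.sin (2*y) : ℝ) : ℂ) * I := by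
  rw [Complex.cosh_add, Complex.sinh_mul_I, Complex.cosh_mul_I]; push_cast; ring

lemma quot_im' (α a b u v : ℝ) (hden : (a*v)^2 + (b*u)^2 ≠ 0) :
    -(((2:ℂ) / (((a*v : ℝ):ℂ) + ((b*u : ℝ):ℂ)*I)) *
        ((α : ℂ) + (((b*v : ℝ):ℂ) + ((a*u : ℝ):ℂ)*I) / (((a*v : ℝ):ℂ) + ((b*u : ℝ):ℂ)*I))).im
      = 2 * u * (v^2 * (α * a^2 * b - a^3 + 2*a*b^2) + u^2 * b^2 * (α * b + a))
          / (a^2*v^2 + b^2*u^2)^2 := by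
  simp only [Complex.div_im, Complex.div_re, Complex.mul_im, Complex.mul_re, Complex.add_im,
    Complex.add_re, Complex.normSq_apply, Complex.ofReal_re, Complex.ofReal_im,
    Complex.I_re, Complex.I_im]
  norm_num
  have h0 : a * v * (a * v) + b * u * (b * u) ≠ 0 := by
    rw [show a * v * (a * v) + b * u * (b * u) = (a*v)^2+(b*u)^2 by ring]; exact hden
  have h3 : a ^ 2 * v ^ 2 + b ^ 2 * u ^ 2 ≠ 0 := by
    rw [show a^2*v^2+b^2*u^2 = (a*v)^2+(b*u)^2 by ring]; exact hden
  rw [eq_div_iff (pow_ne_zero 2 h3)]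
  field_simp [h0]
  ring

lemma neg_im_phaseDeriv' (α x y : ℝ) (hu : Real.sin (2*y) ≠ 0) :
    -(phaseDeriv α ((x : ℂ) + Complex.I * (y : ℂ))).im
      = 2 * Real.sin (2*y) *
          ((Real.cos (2*y))^2 * (α * (Real.sinh (2*x))^2 * Real.cosh (2*x)
              - (Real.sinh (2*x))^3 + 2 * Real.sinh (2*x) * (Real.cosh (2*x))^2)
            + (Real.sin (2*y))^2 * (Real.cosh (2*x))^2
              * (α * Real.cosh (2*x) + Real.sinh (2*x)))
        / ((Real.sinh (2*x))^2 * (Real.cos (2*y))^2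
            + (Real.cosh (2*x))^2 * (Real.sin (2*y))^2)^2 := by
  have hden : (Real.sinh (2*x) * Real.cos (2*y))^2 + (Real.cosh (2*x) * Real.sin (2*y))^2 ≠ 0 := by
    have h1 : 1 ≤ Real.cosh (2*x) := Real.one_le_cosh _
    have h2 : 0 < (Real.cosh (2*x) * Real.sin (2*y))^2 := by positivity
    nlinarith [sq_nonneg (Real.sinh (2*x) * Real.cos (2*y))]
  have h2 : (2:ℂ)*((x:ℂ) + Complex.I * (y:ℂ)) = ((2*x:ℝ) : ℂ) + ((2*y:ℝ) : ℂ)*I := by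
    push_cast; ring
  unfold phaseDeriv
  rw [h2, sinh_decomp', cosh_decomp']
  exact quot_im' α _ _ _ _ hden

lemma bracket_pos (α : ℝ) (hα : 1 < α) (x u v : ℝ) (hx : 1 + 2/(α-1) ≤ |x|) (hu : u ≠ 0) :
    0 < v^2 * (α * (Real.sinh (2*x))^2 * Real.cosh (2*x)
          - (Real.sinh (2*x))^3 + 2 * Real.sinh (2*x) * (Real.cosh (2*x))^2)
        + u^2 * (Real.cosh (2*x))^2 * (α * Real.cosh (2*x) + Real.sinh (2*x)) := by
  have hα1 : 0 < α - 1 := by linarith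
  set a := Real.sinh (2*x) with ha
  set b := Real.cosh (2*x) with hb
  have hb2 : b^2 = a^2 + 1 := Real.cosh_sq _
  have hb1 : 1 ≤ b := Real.one_le_cosh _
  have hba : 0 < b + a := by
    rw [ha, hb, Real.cosh_add_sinh]; exact Real.exp_pos _
  have hu2 : 0 < u^2 := by positivity
  have hR : 0 < 1 + 2/(α-1) := by positivity
  rcases le_or_gt 0 x with hx0 | hx0
  · -- x ≥ R > 0
    have hxR : 1 + 2/(α-1) ≤ x := by rwa [_root_.abs_of_nonneg hx0] at hx
    have hapos : 0 < a := by
      rw [ha, Real.sinh_pos_iff]; linarith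
    have h1 : 0 < α * b + a := by nlinarith
    have h2 : 0 < α * a * b + a^2 + 2 := by nlinarith
    have key : α * a^2 * b - a^3 + 2*a*b^2 = a*(α*a*b + a^2 + 2) := by rw [hb2]; ring
    have h7 : 0 ≤ v^2 * (α * a^2 * b - a^3 + 2*a*b^2) := by
      rw [key]; exact mul_nonneg (sq_nonneg v) (mul_pos hapos h2).le
    have h8 : 0 < u^2 * b^2 * (α * b + a) :=
      mul_pos (mul_pos hu2 (by nlinarith : (0:ℝ) < b^2)) h1
    linarith
  · -- x ≤ -R
    have hxR : x ≤ -(1 + 2/(α-1)) := by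
      rw [_root_.abs_of_neg hx0] at hx; linarith
    have haneg : a < 0 := by
      rw [ha]; rw [show (0:ℝ) = Real.sinh 0 by simp]
      exact Real.sinh_lt_sinh.mpr (by linarith)
    have hale : a ≤ -(2 * (1 + 2/(α-1))) := by
      have h1 : Real.sinh (2*x) ≤ Real.sinh (-(2 * (1 + 2/(α-1)))) :=
        Real.sinh_le_sinh.mpr (by linarith)
      have h2 : Real.sinh (-(2 * (1 + 2/(α-1)))) ≤ -(2 * (1 + 2/(α-1))) := by
        have h3 : 2 * (1 + 2/(α-1)) < Real.sinh (2 * (1 + 2/(α-1))) :=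
          Real.self_lt_sinh_iff.mpr (by positivity)
        rw [Real.sinh_neg]; linarith
      linarith
    have h1 : α - 1 ≤ α * b + a := by nlinarith
    have h2 : α * a * b + a^2 + 2 < 0 := by
      have h3 : a * (α * b + a) ≤ a * (α - 1) := by nlinarith
      have h4 : a * (α - 1) ≤ -(2 * (1 + 2/(α-1))) * (α - 1) := by nlinarith
      have h5 : -(2 * (1 + 2/(α-1))) * (α - 1) = -(2*(α-1)) - 4 := by field_simp; ring
      nlinarith
    have hbpos : (0:ℝ) < b^2 := by nlinarith
    have h6 : 0 < α * b + a := by linarith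
    have key : α * a^2 * b - a^3 + 2*a*b^2 = a*(α*a*b + a^2 + 2) := by rw [hb2]; ring
    have h7 : 0 ≤ v^2 * (α * a^2 * b - a^3 + 2*a*b^2) := by
      rw [key]; exact mul_nonneg (sq_nonneg v) (mul_pos_of_neg_of_neg haneg h2).le
    have h8 : 0 < u^2 * b^2 * (α * b + a) := mul_pos (mul_pos hu2 hbpos) h6
    linarith

lemma den_pos (x u v : ℝ) (hu : u ≠ 0) :
    0 < (Real.sinh (2*x))^2 * v^2 + (Real.cosh (2*x))^2 * u^2 := by
  have hb1 : 1 ≤ Real.cosh (2*x) := Real.one_le_cosh _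
  have h2 : 0 < (Real.cosh (2*x))^2 * u^2 := by positivity
  nlinarith [sq_nonneg (Real.sinh (2*x) * v)]

/-- For `α > 1` there is an `R > 0` such that for `|Re λ| ≥ R` the quantity
`∂_y Re g = -Im G` is strictly positive for `Im λ ∈ (0, π/2)` and strictly negative
for `Im λ ∈ (-π/4, 0) ∪ (π/2, 3π/4)`. -/
theorem im_phaseDeriv_signs_far_out (α : ℝ) (hα : 1 < α) :
    ∃ R > (0 : ℝ), ∀ x : ℝ, R ≤ |x| →
      (∀ y ∈ Set.Ioo (0 : ℝ) (π / 2),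
        0 < -(phaseDeriv α ((x : ℂ) + Complex.I * (y : ℂ))).im) ∧
      (∀ y, y ∈ Set.Ioo (-(π / 4)) (0 : ℝ) ∪ Set.Ioo (π / 2) (3 * π / 4) →
        -(phaseDeriv α ((x : ℂ) + Complex.I * (y : ℂ))).im < 0) := by
  have hα1 : 0 < α - 1 := by linarith
  refine ⟨1 + 2/(α-1), by positivity, fun x hx => ⟨?_, ?_⟩⟩
  · intro y hy
    have hu : 0 < Real.sin (2*y) :=
      Real.sin_pos_of_pos_of_lt_pi (by linarith [hy.1]) (by linarith [hy.2])
    rw [neg_im_phaseDeriv' α x y (ne_of_gt hu)]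
    exact div_pos (mul_pos (mul_pos two_pos hu)
        (bracket_pos α hα x _ _ hx (ne_of_gt hu)))
      (pow_pos (den_pos x _ _ (ne_of_gt hu)) 2)
  · intro y hy
    have hu : Real.sin (2*y) < 0 := by
      rcases hy with hy | hy
      · have h1 : 0 < Real.sin (-(2*y)) :=
          Real.sin_pos_of_pos_of_lt_pi (by linarith [hy.2]) (by
            have := Real.pi_gt_three; linarith [hy.1])
        rw [Real.sin_neg] at h1; linarith
      · have h1 : 0 < Real.sin (2*y - π) :=
          Real.sin_pos_of_pos_of_lt_pi (by linarith [hy.1]) (by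
            have := Real.pi_pos; linarith [hy.2])
        rw [Real.sin_sub_pi] at h1; linarith
    rw [neg_im_phaseDeriv' α x y (ne_of_lt hu)]
    exact div_neg_of_neg_of_pos (mul_neg_of_neg_of_pos (by linarith)
        (bracket_pos α hα x _ _ hx (ne_of_lt hu)))
      (pow_pos (den_pos x _ _ (ne_of_lt hu)) 2)
end
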